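/- arXiv:1905.00516 — 5 statements merged into one kernel-verified Lean document; each statement's English description precedes it below -/
import Mathlib

section
/- Let $\mathcal{P}_2$ be the set of MTP2 probability distributions on $\{-1,1\}^d$ and let $U = \{x_1,\ldots,x_n\}$ be a nonempty finite sample with likelihood $L(p) = \prod_{i=1}^n p(x_i)$. Then the likelihood $L$ attains its maximum over $\mathcal{P}_2$ at a unique point $\hat{p}$. -/
/-!
The likelihood is continuous and the MTP2 distributions form a compact set containing the uniform
distribution, so a maximiser exists, and its likelihood is positive. If `p` and `q` are two
maximisers, the normalised geometric mean `√p √q / c`, with `c = ∑ √p √q` the Bhattacharyya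
coefficient, is again MTP2 and has likelihood `L / c ^ n`. Maximality forces `c ≥ 1`, while
`∑ (√p - √q) ^ 2 = 2 (1 - c)`, so `p = q`.
-/

def IsProb {X : Type*} [Fintype X] (p : X → ℝ) : Prop :=
  (∀ x, 0 ≤ p x) ∧ ∑ x, p x = 1

def MTP2 {d : ℕ} (p : (Fin d → Bool) → ℝ) : Prop :=
  ∀ x y, p x * p y ≤ p (x ⊔ y) * p (x ⊓ y)

open Finset Real

section ProbabilityVector

variable {X : Type*} [Fintype X]

theorem isProb_uniform [Nonempty X] : IsProb fun _ : X => (Fintype.card X : ℝ)⁻¹ := by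
  refine ⟨fun _ => by positivity, ?_⟩
  rw [sum_const, card_univ, nsmul_eq_mul, mul_inv_cancel₀ (by simp)]

noncomputable def bhattacharyya (p q : X → ℝ) : ℝ := ∑ x, √(p x) * √(q x)

theorem bhattacharyya_nonneg (p q : X → ℝ) : 0 ≤ bhattacharyya p q :=
  sum_nonneg fun _ _ => by positivity

theorem sum_sqrt_sub_sqrt_sq {p q : X → ℝ} (hp : IsProb p) (hq : IsProb q) :
    ∑ x, (√(p x) - √(q x)) ^ 2 = 2 * (1 - bhattacharyya p q) := by
  have hsq : ∀ x, (√(p x) - √(q x)) ^ 2 = p x + q x - 2 * (√(p x) * √(q x)) := fun x => by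
    rw [sub_sq, sq_sqrt (hp.1 x), sq_sqrt (hq.1 x)]; ring
  simp only [hsq, sum_sub_distrib, sum_add_distrib, ← mul_sum, hp.2, hq.2, bhattacharyya]
  ring

theorem eq_of_one_le_bhattacharyya {p q : X → ℝ} (hp : IsProb p) (hq : IsProb q)
    (h : 1 ≤ bhattacharyya p q) : p = q := by
  have hzero : ∑ x, (√(p x) - √(q x)) ^ 2 = 0 :=
    le_antisymm (by linarith [sum_sqrt_sub_sqrt_sq hp hq]) (sum_nonneg fun _ _ => sq_nonneg _)
  funext x
  have hx := (sum_eq_zero_iff_of_nonneg fun _ _ => sq_nonneg _).mp hzero x (mem_univ x)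
  rwa [sq_eq_zero_iff, sub_eq_zero, sqrt_inj (hp.1 x) (hq.1 x)] at hx

noncomputable def geomMean (p q : X → ℝ) : X → ℝ := fun x => √(p x) * √(q x) / bhattacharyya p q

theorem isProb_geomMean {p q : X → ℝ} (h : bhattacharyya p q ≠ 0) : IsProb (geomMean p q) :=
  ⟨fun _ => div_nonneg (by positivity) (bhattacharyya_nonneg p q),
    by simp only [geomMean, ← sum_div]; exact div_self h⟩

theorem prod_geomMean {ι : Type*} [Fintype ι] (x : ι → X) {p q : X → ℝ}
    (hp : ∀ z, 0 ≤ p z) (hq : ∀ z, 0 ≤ q z) :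
    ∏ i, geomMean p q (x i) =
      √(∏ i, p (x i)) * √(∏ i, q (x i)) / bhattacharyya p q ^ Fintype.card ι := by
  simp only [geomMean, prod_div_distrib, prod_mul_distrib, prod_const, card_univ,
    sqrt_prod _ fun i _ => hp (x i), sqrt_prod _ fun i _ => hq (x i)]

end ProbabilityVector

section MTP2

variable {d : ℕ}

theorem MTP2.const (c : ℝ) : MTP2 fun _ : Fin d → Bool => c := fun _ _ => le_rfl

theorem MTP2.mul {p q : (Fin d → Bool) → ℝ} (hp : MTP2 p) (hq : MTP2 q)
    (hp₀ : ∀ x, 0 ≤ p x) (hq₀ : ∀ x, 0 ≤ q x) : MTP2 (p * q) := fun x y => by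
  calc p x * q x * (p y * q y) = p x * p y * (q x * q y) := by ring
    _ ≤ p (x ⊔ y) * p (x ⊓ y) * (q (x ⊔ y) * q (x ⊓ y)) :=
      mul_le_mul (hp x y) (hq x y) (mul_nonneg (hq₀ x) (hq₀ y))
        (mul_nonneg (hp₀ _) (hp₀ _))
    _ = p (x ⊔ y) * q (x ⊔ y) * (p (x ⊓ y) * q (x ⊓ y)) := by ring

theorem MTP2.sqrt {p : (Fin d → Bool) → ℝ} (hp : MTP2 p) (hp₀ : ∀ x, 0 ≤ p x) :
    MTP2 fun x => √(p x) := fun x y => by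
  rw [← Real.sqrt_mul (hp₀ x), ← Real.sqrt_mul (hp₀ _)]
  exact sqrt_le_sqrt (hp x y)

theorem MTP2.div_const {p : (Fin d → Bool) → ℝ} (hp : MTP2 p) (c : ℝ) :
    MTP2 fun x => p x / c := fun x y => by
  simp only [div_mul_div_comm]
  exact div_le_div_of_nonneg_right (hp x y) (mul_self_nonneg c)

theorem MTP2.geomMean {p q : (Fin d → Bool) → ℝ} (hp : MTP2 p) (hq : MTP2 q)
    (hp₀ : ∀ x, 0 ≤ p x) (hq₀ : ∀ x, 0 ≤ q x) : MTP2 (geomMean p q) :=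
  ((hp.sqrt hp₀).mul (hq.sqrt hq₀) (fun _ => Real.sqrt_nonneg _)
    (fun _ => Real.sqrt_nonneg _)).div_const _

theorem isClosed_setOf_MTP2 : IsClosed {p : (Fin d → Bool) → ℝ | MTP2 p} := by
  simp only [MTP2, Set.ofPred_forall]
  exact isClosed_iInter fun x => isClosed_iInter fun y =>
    isClosed_le (by fun_prop) (by fun_prop)

theorem isCompact_setOf_isProb_MTP2 :
    IsCompact {p : (Fin d → Bool) → ℝ | IsProb p ∧ MTP2 p} :=
  (isCompact_stdSimplex ℝ _).inter_right isClosed_setOf_MTP2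

end MTP2

def IsGeomConvex {X : Type*} [Fintype X] (K : Set (X → ℝ)) : Prop :=
  ∀ p ∈ K, ∀ q ∈ K, bhattacharyya p q ≠ 0 → geomMean p q ∈ K

theorem isGeomConvex_setOf_isProb_MTP2 {d : ℕ} :
    IsGeomConvex {p : (Fin d → Bool) → ℝ | IsProb p ∧ MTP2 p} :=
  fun _ ⟨hp, hp'⟩ _ ⟨hq, hq'⟩ h => ⟨isProb_geomMean h, hp'.geomMean hq' hp.1 hq.1⟩

theorem IsGeomConvex.eq_of_isMaxOn {X ι : Type*} [Fintype X] [Fintype ι] [Nonempty ι]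
    {K : Set (X → ℝ)} (hK : IsGeomConvex K) (hKprob : ∀ p ∈ K, IsProb p) (x : ι → X)
    {p q : X → ℝ} (hpK : p ∈ K) (hqK : q ∈ K)
    (hpmax : IsMaxOn (fun r => ∏ i, r (x i)) K p) (hqmax : IsMaxOn (fun r => ∏ i, r (x i)) K q)
    (hpos : 0 < ∏ i, p (x i)) : p = q := by
  have hp := hKprob p hpK
  have hq := hKprob q hqK
  have hLp := isMaxOn_iff.mp hpmax
  set L := ∏ i, p (x i)
  have hLq : ∏ i, q (x i) = L := le_antisymm (hLp q hqK) (isMaxOn_iff.mp hqmax p hpK)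
  have hc : 0 < bhattacharyya p q := by
    obtain ⟨i⟩ := ‹Nonempty ι›
    have hpi : 0 < p (x i) := (hp.1 _).lt_of_ne' (prod_ne_zero_iff.mp hpos.ne' i (mem_univ i))
    have hqi : 0 < q (x i) :=
      (hq.1 _).lt_of_ne' (prod_ne_zero_iff.mp (hLq ▸ hpos.ne') i (mem_univ i))
    exact (by positivity : 0 < √(p (x i)) * √(q (x i))).trans_le <|
      single_le_sum (f := fun z => √(p z) * √(q z)) (fun _ _ => by positivity) (mem_univ _)
  have hmean : L / bhattacharyya p q ^ Fintype.card ι ≤ L := by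
    have := hLp _ (hK p hpK q hqK hc.ne')
    rwa [prod_geomMean x hp.1 hq.1, hLq, mul_self_sqrt hpos.le] at this
  have hcn : 1 ≤ bhattacharyya p q ^ Fintype.card ι := by
    rw [div_le_iff₀ (by positivity)] at hmean
    nlinarith
  exact eq_of_one_le_bhattacharyya hp hq <|
    (one_le_pow_iff_of_nonneg hc.le Fintype.card_ne_zero).mp hcn

theorem stmt3 {d n : ℕ} (hn : 0 < n) (x : Fin n → (Fin d → Bool)) :
    ∃! p : (Fin d → Bool) → ℝ, (IsProb p ∧ MTP2 p) ∧
      ∀ q : (Fin d → Bool) → ℝ, IsProb q → MTP2 q →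
        (∏ i, q (x i)) ≤ ∏ i, p (x i) := by
  have : Nonempty (Fin n) := ⟨⟨0, hn⟩⟩
  set K := {p : (Fin d → Bool) → ℝ | IsProb p ∧ MTP2 p}
  have huK : (fun _ => (Fintype.card (Fin d → Bool) : ℝ)⁻¹) ∈ K := ⟨isProb_uniform, .const _⟩
  obtain ⟨p, hpK, hpmax⟩ := isCompact_setOf_isProb_MTP2.exists_isMaxOn ⟨_, huK⟩
    (show Continuous fun r : (Fin d → Bool) → ℝ => ∏ i, r (x i) by fun_prop).continuousOn
  refine ⟨p, ⟨hpK, fun q hq hq' => hpmax ⟨hq, hq'⟩⟩, fun q ⟨hqK, hqmax⟩ => ?_⟩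
  have hpos : 0 < ∏ i, p (x i) := (prod_pos fun _ _ => by positivity).trans_le (hpmax huK)
  exact (isGeomConvex_setOf_isProb_MTP2.eq_of_isMaxOn (fun r hr => hr.1) x hpK hqK hpmax
    (isMaxOn_iff.mpr fun r hr => hqmax r hr.1 hr.2) hpos).symm
end

section
/- Let $\hat{p}$ be the maximizer of the likelihood $L(p) = \prod_{i=1}^n p(x_i)$ over the set $\mathcal{P}_2$ of MTP2 distributions on $\{-1,1\}^d$, for a sample $U = \{x_1,\ldots,x_n\}$. Then the support of $\hat{p}$ equals $\mathcal{L}(U)$, the smallest sublattice of $\{-1,1\}^d$ containing $U$. -/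
/-- The smallest sublattice of a lattice containing a set `U`. -/
def latClosure {α : Type*} [Lattice α] (U : Set α) : Set α :=
  ⋂₀ {L : Set α | U ⊆ L ∧ ∀ x ∈ L, ∀ y ∈ L, x ⊓ y ∈ L ∧ x ⊔ y ∈ L}

lemma latClosure_spec {α : Type*} [Lattice α] (U : Set α) :
    U ⊆ latClosure U ∧ ∀ a ∈ latClosure U, ∀ b ∈ latClosure U,
      a ⊓ b ∈ latClosure U ∧ a ⊔ b ∈ latClosure U := by
  refine ⟨fun u hu => Set.mem_sInter.2 fun L hL => hL.1 hu, fun a ha b hb => ⟨?_, ?_⟩⟩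
  · exact Set.mem_sInter.2 fun L hL =>
      (hL.2 a (Set.mem_sInter.1 ha L hL) b (Set.mem_sInter.1 hb L hL)).1
  · exact Set.mem_sInter.2 fun L hL =>
      (hL.2 a (Set.mem_sInter.1 ha L hL) b (Set.mem_sInter.1 hb L hL)).2

lemma latClosure_min {α : Type*} [Lattice α] {U L : Set α} (hU : U ⊆ L)
    (hL : ∀ x ∈ L, ∀ y ∈ L, x ⊓ y ∈ L ∧ x ⊔ y ∈ L) : latClosure U ⊆ L :=
  Set.sInter_subset_of_mem ⟨hU, hL⟩

theorem stmt4 {d n : ℕ} (hn : 0 < n) (x : Fin n → (Fin d → Bool))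
    (p : (Fin d → Bool) → ℝ) (hp : IsProb p) (hm : MTP2 p)
    (hmax : ∀ q : (Fin d → Bool) → ℝ, IsProb q → MTP2 q →
      (∏ i, q (x i)) ≤ ∏ i, p (x i)) :
    {y | 0 < p y} = latClosure (Set.range x) := by
  classical
  obtain ⟨hp0, hp1⟩ := hp
  -- uniform distribution
  have hcard : (0:ℕ) < Fintype.card (Fin d → Bool) := Fintype.card_pos
  set c : ℝ := (Fintype.card (Fin d → Bool) : ℝ)⁻¹ with hc
  have hcpos : 0 < c := by positivity
  have hq0 : IsProb (fun _ : (Fin d → Bool) => c) := by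
    refine ⟨fun _ => hcpos.le, ?_⟩
    rw [Finset.sum_const, Finset.card_univ, nsmul_eq_mul, hc,
      mul_inv_cancel₀ (by exact_mod_cast hcard.ne')]
  have hq0m : MTP2 (fun _ : (Fin d → Bool) => c) := fun _ _ => le_refl _
  have hpos : 0 < ∏ i, p (x i) := by
    refine lt_of_lt_of_le ?_ (hmax _ hq0 hq0m)
    simp only [Finset.prod_const]
    positivity
  have hxi : ∀ i, 0 < p (x i) := by
    intro i
    rcases (hp0 (x i)).lt_or_eq with h | h
    · exact h
    · exact absurd (Finset.prod_eq_zero (Finset.mem_univ i) h.symm) hpos.ne'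
  set L := latClosure (Set.range x) with hLdef
  obtain ⟨hUL, hLlat⟩ := latClosure_spec (Set.range x)
  -- support contains L
  have hSsub : L ⊆ {y | 0 < p y} := by
    refine latClosure_min ?_ ?_
    · rintro _ ⟨i, rfl⟩; exact hxi i
    · intro a ha b hb
      have h2 : 0 < p (a ⊔ b) * p (a ⊓ b) := lt_of_lt_of_le (mul_pos ha hb) (hm a b)
      have hinf : 0 < p (a ⊓ b) := by
        rcases (hp0 (a ⊓ b)).lt_or_eq with h | h
        · exact h
        · simp [← h] at h2
      have hsup : 0 < p (a ⊔ b) := by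
        rcases (hp0 (a ⊔ b)).lt_or_eq with h | h
        · exact h
        · simp [← h] at h2
      exact ⟨hinf, hsup⟩
  -- now the converse : p is supported on L
  have hxL : ∀ i, x i ∈ L := fun i => hUL ⟨i, rfl⟩
  set s : ℝ := ∑ y, Set.indicator L p y with hs
  have hind0 : ∀ y, 0 ≤ Set.indicator L p y := fun y => Set.indicator_nonneg (fun z _ => hp0 z) y
  have hspos : 0 < s := by
    refine Finset.sum_pos' (fun y _ => hind0 y) ⟨x ⟨0, hn⟩, Finset.mem_univ _, ?_⟩
    rw [Set.indicator_of_mem (hxL ⟨0, hn⟩)]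
    exact hxi ⟨0, hn⟩
  have hsle : s ≤ 1 := by
    rw [hs, ← hp1]
    refine Finset.sum_le_sum fun y _ => ?_
    by_cases hy : y ∈ L
    · rw [Set.indicator_of_mem hy]
    · rw [Set.indicator_of_notMem hy]; exact hp0 y
  set q : (Fin d → Bool) → ℝ := fun y => Set.indicator L p y / s with hq
  have hqprob : IsProb q := by
    refine ⟨fun y => div_nonneg (hind0 y) hspos.le, ?_⟩
    rw [hq]
    rw [← Finset.sum_div, ← hs, div_self hspos.ne']
  have hqm : MTP2 q := by
    intro a b
    simp only [hq, div_mul_div_comm]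
    rw [div_le_div_iff_of_pos_right (mul_pos hspos hspos)]
    by_cases ha : a ∈ L
    · by_cases hb : b ∈ L
      · rw [Set.indicator_of_mem ha, Set.indicator_of_mem hb,
          Set.indicator_of_mem (hLlat a ha b hb).2, Set.indicator_of_mem (hLlat a ha b hb).1]
        exact hm a b
      · rw [Set.indicator_of_notMem hb, mul_zero]
        exact mul_nonneg (hind0 _) (hind0 _)
    · rw [Set.indicator_of_notMem ha, zero_mul]
      exact mul_nonneg (hind0 _) (hind0 _)
  have hlik : ∏ i, q (x i) = (∏ i, p (x i)) / s ^ n := by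
    rw [hq]
    simp only
    rw [Finset.prod_div_distrib, Finset.prod_const, Finset.card_univ, Fintype.card_fin]
    congr 1
    exact Finset.prod_congr rfl fun i _ => by rw [Set.indicator_of_mem (hxL i)]
  have hs1 : s = 1 := by
    have h := hmax q hqprob hqm
    rw [hlik] at h
    have hsn : 1 ≤ s ^ n := by
      by_contra hlt
      push_neg at hlt
      have : ∏ i, p (x i) < (∏ i, p (x i)) / s ^ n := by
        rw [lt_div_iff₀ (by positivity)]
        nlinarith
      linarith
    have : 1 ≤ s := by
      rcases le_or_gt 1 s with h1 | h1
      · exact h1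
      · exfalso
        have : s ^ n < 1 := pow_lt_one₀ hspos.le h1 hn.ne'
        linarith
    linarith
  have hzero : ∀ y, y ∉ L → p y = 0 := by
    intro y hy
    have hsum0 : ∑ z, (p z - Set.indicator L p z) = 0 := by
      rw [Finset.sum_sub_distrib, hp1, ← hs, hs1, sub_self]
    have hterm : ∀ z ∈ Finset.univ, 0 ≤ p z - Set.indicator L p z := by
      intro z _
      by_cases hz : z ∈ L
      · rw [Set.indicator_of_mem hz]; simp
      · rw [Set.indicator_of_notMem hz]; simpa using hp0 z
    have h := (Finset.sum_eq_zero_iff_of_nonneg hterm).1 hsum0 y (Finset.mem_univ y)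
    rw [Set.indicator_of_notMem hy] at h
    linarith
  ext y
  simp only [Set.mem_setOf_eq]
  constructor
  · intro hy
    by_contra hyL
    rw [hzero y hyL] at hy
    exact lt_irrefl 0 hy
  · exact fun hy => hSsub hy
end

section
/- Let $p$ be an MTP2 probability distribution on $\{-1,1\}^d$ and let $x \in \{-1,1\}^d$. If for every pair of indices $i,j$ the pair-marginal probability $p_{ij}(x_i,x_j) = \sum_{y: y_i = x_i, y_j = x_j} p(y)$ is strictly positive, then $p(x) > 0$. -/
/-!
The positive part of an MTP2 distribution is closed under `⊔` and `⊓`, so it suffices to build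
`x` from the positive points `y` with `y i = x i` and `y j = x j` supplied by the pair marginals.
Fixing `i`, the meet of such points over all `j ≠ i` lies below `x` and agrees with `x` at `i`;
the join of these meets over all `i` is then `x` itself.
-/

section PiLattice

variable {ι : Type*} [Fintype ι] [Nontrivial ι] {α : ι → Type*} [∀ i, Lattice (α i)]
  {s : Set (∀ i, α i)} {x : ∀ i, α i}

theorem exists_mem_le_apply_eq_of_pairs (hinf : InfClosed s)
    (hpair : ∀ i j, i ≠ j → ∃ y ∈ s, y i = x i ∧ y j = x j) (i : ι) :
    ∃ w ∈ s, w ≤ x ∧ w i = x i := by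
  have hwitness : ∀ j, ∃ y ∈ s, y i = x i ∧ (j ≠ i → y j = x j) := by
    intro j
    by_cases hji : j = i
    · obtain ⟨k, hk⟩ := exists_ne i
      obtain ⟨y, hy, hyi, -⟩ := hpair i k hk.symm
      exact ⟨y, hy, hyi, absurd hji⟩
    · obtain ⟨y, hy, hyi, hyj⟩ := hpair i j (Ne.symm hji)
      exact ⟨y, hy, hyi, fun _ => hyj⟩
  choose y hys hyi hyj using hwitness
  have hwi : Finset.univ.inf' Finset.univ_nonempty y i = x i := by
    rw [Finset.inf'_apply, Finset.inf'_congr _ rfl fun j _ => hyi j, Finset.inf'_const]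
  refine ⟨_, hinf.finsetInf'_mem _ fun j _ => hys j, fun j => ?_, hwi⟩
  by_cases hji : j = i
  · exact hji ▸ hwi.le
  · exact (Finset.inf'_le y (Finset.mem_univ j) j).trans_eq (hyj j hji)

theorem mem_of_forall_pairs (hsup : SupClosed s) (hinf : InfClosed s)
    (hpair : ∀ i j, i ≠ j → ∃ y ∈ s, y i = x i ∧ y j = x j) : x ∈ s := by
  choose w hws hwx hwi using exists_mem_le_apply_eq_of_pairs hinf hpair
  have hsup_eq : Finset.univ.sup' Finset.univ_nonempty w = x :=
    le_antisymm (Finset.sup'_le _ _ fun i _ => hwx i)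
      fun j => (hwi j).symm.le.trans (Finset.le_sup' w (Finset.mem_univ j) j)
  exact hsup_eq ▸ hsup.finsetSup'_mem _ fun i _ => hws i

end PiLattice

namespace MTP2

variable {d : ℕ} {p : (Fin d → Bool) → ℝ}

theorem pos_sup_and_pos_inf (hm : MTP2 p) (hnn : ∀ y, 0 ≤ p y) {a b : Fin d → Bool}
    (ha : 0 < p a) (hb : 0 < p b) : 0 < p (a ⊔ b) ∧ 0 < p (a ⊓ b) := by
  have hprod : 0 < p (a ⊔ b) * p (a ⊓ b) := (mul_pos ha hb).trans_le (hm a b)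
  exact ⟨pos_of_mul_pos_left hprod (hnn _), pos_of_mul_pos_right hprod (hnn _)⟩

theorem supClosed_pos (hm : MTP2 p) (hnn : ∀ y, 0 ≤ p y) : SupClosed {y | 0 < p y} :=
  fun _ ha _ hb => (hm.pos_sup_and_pos_inf hnn ha hb).1

theorem infClosed_pos (hm : MTP2 p) (hnn : ∀ y, 0 ≤ p y) : InfClosed {y | 0 < p y} :=
  fun _ ha _ hb => (hm.pos_sup_and_pos_inf hnn ha hb).2

end MTP2

theorem stmt10 {d : ℕ} (hd : 2 ≤ d) (p : (Fin d → Bool) → ℝ)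
    (hp : IsProb p) (hm : MTP2 p) (x : Fin d → Bool)
    (h : ∀ i j : Fin d, i ≠ j →
      0 < ∑ y ∈ Finset.univ.filter (fun y : Fin d → Bool => y i = x i ∧ y j = x j), p y) :
    0 < p x := by
  have : Nontrivial (Fin d) := Fin.nontrivial_iff_two_le.mpr hd
  refine mem_of_forall_pairs (hm.supClosed_pos hp.1) (hm.infClosed_pos hp.1) fun i j hij => ?_
  obtain ⟨y, hy, hpy⟩ := Finset.exists_lt_of_sum_lt <| (Finset.sum_const_zero).trans_lt (h i j hij)
  exact ⟨y, hpy, (Finset.mem_filter.mp hy).2⟩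
end

section
/- An MTP2 probability distribution $p$ on $\{-1,1\}^d$ (with $d \geq 2$) has full support (i.e., $p(x) > 0$ for all $x$) if and only if every pair-marginal $p_{ij}$, $i \neq j$, has full support on $\{-1,1\}^2$. -/
/-!
The support of a nonnegative MTP2 function is a sublattice of the Boolean cube. In a product of
lattices, a sublattice that meets every "pair cylinder" through a point `z` contains `z`: if
`y i j` is in the sublattice and agrees with `z` at `i` and `j`, then `⨅ j, y i j` agrees with `z`
at `i` and lies below it elsewhere, so `⨆ i, ⨅ j, y i j = z`.
-/

open Finset

theorem IsSublattice.mem_of_forall_pair {ι α : Type*} [Fintype ι] [Nonempty ι] [Lattice α]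
    {s : Set (ι → α)} (hs : IsSublattice s) (z : ι → α)
    (h : ∀ i j, ∃ y ∈ s, y i = z i ∧ y j = z j) : z ∈ s := by
  choose y hys hyi hyj using h
  have hsup : univ.sup' univ_nonempty (fun i => univ.inf' univ_nonempty (y i)) = z := by
    ext k
    simp only [Finset.sup'_apply, Finset.inf'_apply]
    apply le_antisymm
    · exact sup'_le _ _ fun i _ => (inf'_le _ (mem_univ k)).trans (hyj i k).le
    · exact (le_inf' _ _ fun j _ => (hyi k j).ge).trans
        (le_sup' (fun i => univ.inf' univ_nonempty fun j => y i j k) (mem_univ k))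
  rw [← hsup]
  exact hs.supClosed.finsetSup'_mem _ fun i _ =>
    hs.infClosed.finsetInf'_mem _ fun j _ => hys i j

theorem MTP2.isSublattice_support {d : ℕ} {p : (Fin d → Bool) → ℝ} (hnn : ∀ x, 0 ≤ p x)
    (hm : MTP2 p) : IsSublattice {x | 0 < p x} := by
  have hprod {x y : Fin d → Bool} (hx : 0 < p x) (hy : 0 < p y) :
      0 < p (x ⊔ y) * p (x ⊓ y) :=
    (mul_pos hx hy).trans_le (hm x y)
  exact ⟨fun x hx y hy => pos_of_mul_pos_left (hprod hx hy) (hnn _),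
    fun x hx y hy => pos_of_mul_pos_right (hprod hx hy) (hnn _)⟩

theorem stmt11 {d : ℕ} (hd : 2 ≤ d) (p : (Fin d → Bool) → ℝ)
    (hp : IsProb p) (hm : MTP2 p) :
    (∀ x, 0 < p x) ↔
      ∀ i j : Fin d, i ≠ j → ∀ a b : Bool,
        0 < ∑ y ∈ Finset.univ.filter (fun y : Fin d → Bool => y i = a ∧ y j = b), p y := by
  have hnn := hp.1
  simp only [sum_pos_iff_of_nonneg (fun y _ => hnn y), mem_filter, mem_univ, true_and]
  refine ⟨fun hpos i j hij a b => ⟨fun k => if k = j then b else a, by simp [hij], hpos _⟩, ?_⟩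
  intro hpair z
  have hpair' (i j : Fin d) (hij : i ≠ j) : ∃ y, 0 < p y ∧ y i = z i ∧ y j = z j := by
    obtain ⟨y, ⟨hyi, hyj⟩, hy⟩ := hpair i j hij (z i) (z j)
    exact ⟨y, hy, hyi, hyj⟩
  have : Nontrivial (Fin d) := Fin.nontrivial_iff_two_le.mpr hd
  refine (MTP2.isSublattice_support hnn hm).mem_of_forall_pair z fun i j => ?_
  rcases eq_or_ne i j with rfl | hij
  · obtain ⟨j, hji⟩ := exists_ne i
    obtain ⟨y, hy, hyi, -⟩ := hpair' i j hji.symm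
    exact ⟨y, hy, hyi, hyi⟩
  · exact hpair' i j hij
end

section
/- Let $U$ be a nonempty finite subset of $\{-1,1\}^d$. The smallest subset $\mathcal{A}(U)$ of $\{-1,1\}^d$ containing $U$ and closed under coordinatewise max, coordinatewise min, and negation $x \mapsto -x$ equals all of $\{-1,1\}^d$ if and only if for every pair $i \neq j$ there exists $x \in U$ with $x_i \neq x_j$. -/
/-!
The condition is necessary because `{x | x i = x j}` is closed under the three operations.
Conversely, if `U` separates coordinates, then for `j ≠ i` some element of `U`, possibly negated,
is true at `i` and false at `j`; hence the meet of all elements of the closure that are true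
at `i` is the atom at `i`. The closure of a nonempty `U` contains `⊥ = u ⊓ uᶜ` and `⊤`, so it
contains all finite meets and joins, and every vector is the join of the atoms below it.
-/

/-- The smallest subset of `Fin d → Bool` containing `U` closed under coordinatewise
max, min and negation. -/
def algClosure {d : ℕ} (U : Set (Fin d → Bool)) : Set (Fin d → Bool) :=
  ⋂₀ {A : Set (Fin d → Bool) | U ⊆ A ∧
    (∀ x ∈ A, ∀ y ∈ A, x ⊓ y ∈ A ∧ x ⊔ y ∈ A) ∧
    (∀ x ∈ A, (fun i => !(x i)) ∈ A)}

section
variable {d : ℕ} {U : Set (Fin d → Bool)} {x y : Fin d → Bool}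

lemma algClosure_subset {A : Set (Fin d → Bool)} (hUA : U ⊆ A)
    (hlat : ∀ x ∈ A, ∀ y ∈ A, x ⊓ y ∈ A ∧ x ⊔ y ∈ A) (hcompl : ∀ x ∈ A, xᶜ ∈ A) :
    algClosure U ⊆ A :=
  Set.sInter_subset_of_mem ⟨hUA, hlat, hcompl⟩

lemma subset_algClosure : U ⊆ algClosure U :=
  fun _ hx => Set.mem_sInter.2 fun _ hA => hA.1 hx

lemma inf_mem_algClosure (hx : x ∈ algClosure U) (hy : y ∈ algClosure U) :
    x ⊓ y ∈ algClosure U :=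
  Set.mem_sInter.2 fun A hA =>
    (hA.2.1 x (Set.mem_sInter.1 hx A hA) y (Set.mem_sInter.1 hy A hA)).1

lemma sup_mem_algClosure (hx : x ∈ algClosure U) (hy : y ∈ algClosure U) :
    x ⊔ y ∈ algClosure U :=
  Set.mem_sInter.2 fun A hA =>
    (hA.2.1 x (Set.mem_sInter.1 hx A hA) y (Set.mem_sInter.1 hy A hA)).2

lemma compl_mem_algClosure (hx : x ∈ algClosure U) : xᶜ ∈ algClosure U :=
  Set.mem_sInter.2 fun A hA => hA.2.2 x (Set.mem_sInter.1 hx A hA)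

lemma bot_mem_algClosure (hU : U.Nonempty) : ⊥ ∈ algClosure U := by
  obtain ⟨u, hu⟩ := hU
  have hu' := subset_algClosure hu
  simpa using inf_mem_algClosure hu' (compl_mem_algClosure hu')

lemma top_mem_algClosure (hU : U.Nonempty) : ⊤ ∈ algClosure U := by
  simpa using compl_mem_algClosure (bot_mem_algClosure hU)

lemma finset_inf_mem_algClosure (hU : U.Nonempty) {ι : Type*} {s : Finset ι}
    {f : ι → Fin d → Bool} (hf : ∀ i ∈ s, f i ∈ algClosure U) : s.inf f ∈ algClosure U :=
  Finset.inf_induction (top_mem_algClosure hU) (fun _ ha _ hb => inf_mem_algClosure ha hb) hf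

lemma finset_sup_mem_algClosure (hU : U.Nonempty) {ι : Type*} {s : Finset ι}
    {f : ι → Fin d → Bool} (hf : ∀ i ∈ s, f i ∈ algClosure U) : s.sup f ∈ algClosure U :=
  Finset.sup_induction (bot_mem_algClosure hU) (fun _ ha _ hb => sup_mem_algClosure ha hb) hf

lemma algClosure_subset_setOf_apply_eq {i j : Fin d} (h : ∀ x ∈ U, x i = x j) :
    algClosure U ⊆ {x | x i = x j} :=
  algClosure_subset h (fun x hx y hy => by simp_all) (fun x hx => by simp_all)

lemma exists_mem_algClosure_apply_eq_true_false {i j : Fin d} (hx : x ∈ U)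
    (hij : x i ≠ x j) :
    ∃ y ∈ algClosure U, y i = true ∧ y j = false := by
  cases hxi : x i
  · exact ⟨xᶜ, compl_mem_algClosure (subset_algClosure hx), by simp_all⟩
  · exact ⟨x, subset_algClosure hx, hxi, by simp_all⟩

def atom (i : Fin d) : Fin d → Bool := fun k => decide (k = i)

open Classical in
lemma atom_eq_inf_algClosure (i : Fin d) (hsep : ∀ j ≠ i, ∃ x ∈ U, x i ≠ x j) :
    atom i = {y | y ∈ algClosure U ∧ y i = true}.toFinset.inf id := by
  funext k
  rw [Finset.inf_apply]
  by_cases hki : k = i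
  · subst hki
    simp only [atom, decide_true]
    refine (top_unique (α := Bool) (Finset.le_inf fun y hy => ?_)).symm
    simp [(Set.mem_toFinset.1 hy).2]
  · obtain ⟨x, hxU, hx⟩ := hsep k hki
    obtain ⟨y, hy, hyi, hyk⟩ := exists_mem_algClosure_apply_eq_true_false (U := U) hxU hx
    have hle := Finset.inf_le (f := fun y : Fin d → Bool => y k)
      (Set.mem_toFinset.2 (show y ∈ {y | y ∈ algClosure U ∧ y i = true} from ⟨hy, hyi⟩))
    simp only [atom, hki, decide_false, id]
    exact (le_bot_iff.1 (hle.trans_eq hyk)).symm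

lemma atom_mem_algClosure (hU : U.Nonempty) (i : Fin d) (hsep : ∀ j ≠ i, ∃ x ∈ U, x i ≠ x j) :
    atom i ∈ algClosure U := by
  classical
  rw [atom_eq_inf_algClosure i hsep]
  exact finset_inf_mem_algClosure hU fun y hy => (Set.mem_toFinset.1 hy).1

lemma eq_sup_atom (z : Fin d → Bool) : z = {i | z i = true}.toFinset.sup atom := by
  funext k
  rw [Finset.sup_apply]
  cases hzk : z k
  · refine ((Finset.sup_eq_bot_iff _ _).2 fun i hi => ?_).symm
    have hik : i ≠ k := by rintro rfl; simp_all
    simp [atom, hik.symm]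
  · refine (top_unique (α := Bool) ?_).symm
    exact le_of_eq_of_le (by simp [atom])
      (Finset.le_sup (f := fun i => atom i k) (b := k) (by simpa using hzk))

end

theorem stmt13_general {d : ℕ} (U : Set (Fin d → Bool)) (hU : U.Nonempty) :
    algClosure U = Set.univ ↔
      ∀ i j : Fin d, i ≠ j → ∃ x ∈ U, x i ≠ x j := by
  constructor
  · intro h i j hij
    by_contra! hnsep
    have hatom : atom i ∈ {x | x i = x j} :=
      algClosure_subset_setOf_apply_eq hnsep (h ▸ Set.mem_univ (atom i))
    simp [atom, hij.symm] at hatom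
  · intro hsep
    refine Set.eq_univ_of_forall fun z => ?_
    rw [eq_sup_atom z]
    exact finset_sup_mem_algClosure hU fun i _ =>
      atom_mem_algClosure hU i fun j hji => hsep i j hji.symm

theorem stmt13 {d : ℕ} (hd : 2 ≤ d) (U : Set (Fin d → Bool)) (hU : U.Nonempty)
    (hUfin : U.Finite) :
    algClosure U = Set.univ ↔
      ∀ i j : Fin d, i ≠ j → ∃ x ∈ U, x i ≠ x j :=
  stmt13_general U hU
end
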